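/- arXiv:2010.07468 — 5 statements merged into one kernel-verified Lean document; each statement's English description precedes it below -/
import Mathlib

section
/- Let F ⊆ ℝ^d be a nonempty closed convex set, θ_t ∈ F, θ* ∈ F, m_{t−1}, g_t ∈ ℝ^d, s_t ∈ ℝ^d with strictly positive coordinates, α_t > 0, 0 ≤ β_{1,t} < 1. Let m_t = β_{1,t} m_{t−1} + (1−β_{1,t}) g_t and let θ_{t+1} be the point of F minimizing x ↦ Σ_{i=1}^d √(s_{t,i}) (x_i − y_{t,i})² where y_t = θ_t − α_t m_t/√s_t. Then ⟨g_t, θ_t − θ*⟩ ≤ (1/(2α_t(1−β_{1,t}))) [ Σ_i √(s_{t,i})(θ_{t,i}−θ*_i)² − Σ_i √(s_{t,i})(θ_{t+1,i}−θ*_i)² ] + (α_t/(2(1−β_{1,t}))) Σ_i m_{t,i}²/√(s_{t,i}) + (β_{1,t} α_t/(2(1−β_{1,t}))) Σ_i m_{t−1,i}²/√(s_{t,i}) + (β_{1,t}/(2α_t(1−β_{1,t}))) Σ_i √(s_{t,i})(θ_{t,i}−θ*_i)². -/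
open RealInnerProductSpace

lemma adabelief_div_eq (P Q M Mp a b : ℝ) (ha : a ≠ 0) (hb : (1:ℝ) - b ≠ 0) :
    ((P - Q) + a^2*M + b*a^2*Mp + b*P) / (2*a*(1-b))
      = 1 / (2 * a * (1 - b)) * (P - Q)
        + a / (2 * (1 - b)) * M
        + b * a / (2 * (1 - b)) * Mp
        + b / (2 * a * (1 - b)) * P := by
  field_simp

/-- one-step AdaBelief inequality. `θ_{t+1}` is the point of the nonempty
closed convex set `F` minimizing `x ↦ Σ_i √(s_{t,i}) (x_i - y_{t,i})²` where
`y_t = θ_t - α_t m_t/√s_t`, and the inner product `⟨g_t, θ_t - θ*⟩` is bounded as in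
the proof of the convex regret theorem. -/
theorem adabelief_one_step_bound
    (d : ℕ) (F : Set (EuclideanSpace ℝ (Fin d)))
    (hFne : F.Nonempty) (hFclosed : IsClosed F) (hFconvex : Convex ℝ F)
    (θt θnext θstar mprev mt g : EuclideanSpace ℝ (Fin d))
    (s : Fin d → ℝ) (αt βt : ℝ)
    (hθt : θt ∈ F) (hθstar : θstar ∈ F)
    (hs : ∀ i, 0 < s i) (hα : 0 < αt) (hβ0 : 0 ≤ βt) (hβ1 : βt < 1)
    (hmt : ∀ i, mt i = βt * mprev i + (1 - βt) * g i)
    (hmem : θnext ∈ F)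
    (hmin : ∀ x ∈ F,
      ∑ i, Real.sqrt (s i) * (θnext i - (θt i - αt * mt i / Real.sqrt (s i))) ^ 2
        ≤ ∑ i, Real.sqrt (s i) * (x i - (θt i - αt * mt i / Real.sqrt (s i))) ^ 2) :
    ⟪g, θt - θstar⟫
      ≤ 1 / (2 * αt * (1 - βt)) *
          ((∑ i, Real.sqrt (s i) * (θt i - θstar i) ^ 2)
            - ∑ i, Real.sqrt (s i) * (θnext i - θstar i) ^ 2)
        + αt / (2 * (1 - βt)) * ∑ i, (mt i) ^ 2 / Real.sqrt (s i)
        + βt * αt / (2 * (1 - βt)) * ∑ i, (mprev i) ^ 2 / Real.sqrt (s i)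
        + βt / (2 * αt * (1 - βt)) * ∑ i, Real.sqrt (s i) * (θt i - θstar i) ^ 2 := by
  have hβ : (0:ℝ) < 1 - βt := by linarith
  set w : Fin d → ℝ := fun i => Real.sqrt (s i) with hwdef
  have hwpos : ∀ i, 0 < w i := fun i => Real.sqrt_pos.2 (hs i)
  set y : Fin d → ℝ := fun i => θt i - αt * mt i / w i with hydef
  -- abbreviations
  set P : ℝ := ∑ i, w i * (θt i - θstar i) ^ 2 with hP
  set Q : ℝ := ∑ i, w i * (θnext i - θstar i) ^ 2 with hQ
  set M : ℝ := ∑ i, (mt i) ^ 2 / w i with hM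
  set Mp : ℝ := ∑ i, (mprev i) ^ 2 / w i with hMp
  set A : ℝ := ∑ i, w i * (θnext i - y i) * (θstar i - θnext i) with hA
  set B : ℝ := ∑ i, w i * (θstar i - θnext i) ^ 2 with hB
  have hBnn : 0 ≤ B := Finset.sum_nonneg fun i _ => mul_nonneg (hwpos i).le (sq_nonneg _)
  -- variational inequality
  have hkey : ∀ l : ℝ, 0 < l → l ≤ 1 → 0 ≤ 2*l*A + l^2*B := by
    intro l hl0 hl1
    have hx : ((1-l) • θnext + l • θstar) ∈ F :=
      hFconvex hmem hθstar (by linarith) hl0.le (by ring)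
    have h1 := hmin _ hx
    have h2 : ∀ i, w i * (((1-l) • θnext + l • θstar) i - y i) ^ 2
        = w i * (θnext i - y i) ^ 2
          + 2*l*(w i * (θnext i - y i) * (θstar i - θnext i))
          + l^2*(w i * (θstar i - θnext i) ^ 2) := by
      intro i
      simp only [PiLp.add_apply, PiLp.smul_apply, smul_eq_mul]
      ring
    have h3 : ∑ i, w i * (((1-l) • θnext + l • θstar) i - y i) ^ 2
        = (∑ i, w i * (θnext i - y i) ^ 2) + 2*l*A + l^2*B := by
      rw [Finset.sum_congr rfl (fun i _ => h2 i)]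
      rw [Finset.sum_add_distrib, Finset.sum_add_distrib, ← Finset.mul_sum, ← Finset.mul_sum]
    rw [h3] at h1
    linarith
  have hvar : 0 ≤ A := by
    by_contra hcon
    push_neg at hcon
    set l : ℝ := min 1 ((-A)/(B+1)) with hl
    have hl0 : 0 < l := lt_min one_pos (div_pos (by linarith) (by linarith))
    have hl1 : l ≤ 1 := min_le_left _ _
    have h1 := hkey l hl0 hl1
    have h2 : 0 ≤ 2*A + l*B := by nlinarith [h1, hl0]
    have hlb : l ≤ (-A)/(B+1) := min_le_right _ _
    have h3 : l * B ≤ ((-A)/(B+1)) * B := mul_le_mul_of_nonneg_right hlb hBnn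
    have h4 : ((-A)/(B+1)) * B ≤ -A := by
      rw [div_mul_eq_mul_div, div_le_iff₀ (by linarith)]
      nlinarith [hBnn, hcon]
    linarith
  -- projection inequality : Q ≤ ∑ w (y - θ*)^2
  have hproj : Q ≤ ∑ i, w i * (y i - θstar i) ^ 2 := by
    have hid : ∀ i, w i * (y i - θstar i) ^ 2
        = w i * (θnext i - θstar i) ^ 2 + w i * (θnext i - y i) ^ 2
          + 2*(w i * (θnext i - y i) * (θstar i - θnext i)) := by
      intro i; ring
    have h3 : ∑ i, w i * (y i - θstar i) ^ 2
        = Q + (∑ i, w i * (θnext i - y i) ^ 2) + 2*A := by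
      rw [Finset.sum_congr rfl (fun i _ => hid i)]
      rw [Finset.sum_add_distrib, Finset.sum_add_distrib, ← Finset.mul_sum]
    have hS : 0 ≤ ∑ i, w i * (θnext i - y i) ^ 2 :=
      Finset.sum_nonneg fun i _ => mul_nonneg (hwpos i).le (sq_nonneg _)
    rw [h3]; linarith
  -- expansion of ∑ w (y - θ*)^2
  have hexp : ∑ i, w i * (y i - θstar i) ^ 2
      = P - 2*αt*(∑ i, mt i * (θt i - θstar i)) + αt^2*M := by
    have hid : ∀ i, w i * (y i - θstar i) ^ 2
        = w i * (θt i - θstar i) ^ 2 - 2*αt*(mt i * (θt i - θstar i))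
          + αt^2*((mt i)^2 / w i) := by
      intro i
      have hwi := (hwpos i).ne'
      simp only [hydef]
      field_simp
      ring
    rw [Finset.sum_congr rfl (fun i _ => hid i)]
    rw [Finset.sum_add_distrib, Finset.sum_sub_distrib, ← Finset.mul_sum, ← Finset.mul_sum]
  -- Young's inequality
  have hyoung : -(2*αt*(∑ i, mprev i * (θt i - θstar i))) ≤ αt^2*Mp + P := by
    have hid : ∀ i, -(2*αt*(mprev i * (θt i - θstar i)))
        ≤ αt^2*((mprev i)^2 / w i) + w i * (θt i - θstar i) ^ 2 := by
      intro i
      have hwi := hwpos i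
      have h3 : (0:ℝ) ≤ (αt * mprev i + w i * (θt i - θstar i))^2 / w i := by positivity
      have h4 : (αt * mprev i + w i * (θt i - θstar i))^2 / w i
          = αt^2*((mprev i)^2 / w i) + w i * (θt i - θstar i) ^ 2
            + 2*αt*(mprev i * (θt i - θstar i)) := by
        field_simp
        ring
      linarith [h4 ▸ h3]
    calc -(2*αt*(∑ i, mprev i * (θt i - θstar i)))
        = ∑ i, -(2*αt*(mprev i * (θt i - θstar i))) := by
          rw [Finset.mul_sum, ← Finset.sum_neg_distrib]
      _ ≤ ∑ i, (αt^2*((mprev i)^2 / w i) + w i * (θt i - θstar i) ^ 2) :=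
          Finset.sum_le_sum fun i _ => hid i
      _ = αt^2*Mp + P := by
          rw [Finset.sum_add_distrib, ← Finset.mul_sum]
  -- momentum decomposition
  have hdec : (∑ i, mt i * (θt i - θstar i))
      = βt * (∑ i, mprev i * (θt i - θstar i))
        + (1-βt) * (∑ i, g i * (θt i - θstar i)) := by
    rw [Finset.mul_sum, Finset.mul_sum, ← Finset.sum_add_distrib]
    refine Finset.sum_congr rfl fun i _ => ?_
    rw [hmt i]; ring
  -- inner product
  have hG : ⟪g, θt - θstar⟫ = ∑ i, g i * (θt i - θstar i) := by
    simp [PiLp.inner_apply, RCLike.inner_apply]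
    exact Finset.sum_congr rfl fun i _ => mul_comm _ _
  set G : ℝ := ∑ i, g i * (θt i - θstar i) with hGdef
  set Ip : ℝ := ∑ i, mprev i * (θt i - θstar i) with hIp
  -- combine
  have hfin : 2*αt*(1-βt)*G ≤ (P - Q) + αt^2*M + βt*αt^2*Mp + βt*P := by
    have h1 : Q ≤ P - 2*αt*(βt*Ip + (1-βt)*G) + αt^2*M := by
      rw [← hdec]; rw [hexp] at hproj; exact hproj
    have h2 : βt*(-(2*αt*Ip)) ≤ βt*(αt^2*Mp + P) :=
      mul_le_mul_of_nonneg_left hyoung hβ0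
    nlinarith [h1, h2]
  rw [hG]
  have hc : (0:ℝ) < 2*αt*(1-βt) := by positivity
  have h5 : G ≤ ((P - Q) + αt^2*M + βt*αt^2*Mp + βt*P) / (2*αt*(1-βt)) := by
    rw [le_div_iff₀ hc]
    nlinarith [hfin]
  calc G ≤ ((P - Q) + αt^2*M + βt*αt^2*Mp + βt*P) / (2*αt*(1-βt)) := h5
    _ = 1 / (2 * αt * (1 - βt)) * (P - Q)
        + αt / (2 * (1 - βt)) * M
        + βt * αt / (2 * (1 - βt)) * Mp
        + βt / (2 * αt * (1 - βt)) * P :=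
      adabelief_div_eq P Q M Mp αt βt hα.ne' hβ.ne'
end

section
/- Let g_1, …, g_T ∈ ℝ^d, let β_{1,j} ∈ [0, β_1] for all j with 0 ≤ β_1 < 1, define m_0 = 0 and m_t = β_{1,t} m_{t−1} + (1−β_{1,t}) g_t, let α_t = α/√t with α > 0, and let s_t ∈ ℝ^d satisfy s_{t,i} ≥ c > 0 for all t ∈ [T] and all i. Then Σ_{t=1}^T α_t Σ_{i=1}^d m_{t,i}²/√(s_{t,i}) ≤ (α √(1+log T))/(√c (1−β_1)²) · Σ_{i=1}^d sqrt(Σ_{t=1}^T g_{t,i}⁴). -/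
/-- Harmonic sum bound: `∑_{t=1}^T 1/t ≤ 1 + log T`. -/
lemma my_harmonic_le_one_add_log (T : ℕ) :
    ∑ t ∈ Finset.Icc 1 T, (1 : ℝ) / t ≤ 1 + Real.log T := by
  induction T with
  | zero => simp
  | succ n ih =>
    rw [Finset.sum_Icc_succ_top (by omega : 1 ≤ n + 1)]
    rcases Nat.eq_zero_or_pos n with hn | hn
    · subst hn; simp
    · have hn0 : (0 : ℝ) < n := by exact_mod_cast hn
      have hstep : (1 : ℝ) / (n + 1) ≤ Real.log (n + 1) - Real.log n := by
        have hpos : (0 : ℝ) < (n : ℝ) / (n + 1) := by positivity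
        have := Real.log_le_sub_one_of_pos hpos
        have hlog : Real.log ((n : ℝ) / (n + 1)) = Real.log n - Real.log (n + 1) :=
          Real.log_div (ne_of_gt hn0) (by positivity)
        rw [hlog] at this
        have h2 : (n : ℝ) / (n + 1) - 1 = -(1 / (n + 1)) := by
          field_simp
          ring
        rw [h2] at this
        linarith
      have hcast : ((n + 1 : ℕ) : ℝ) = (n : ℝ) + 1 := by push_cast; ring
      rw [hcast]
      linarith

/-- Geometric tail bound. -/
lemma geom_Icc_le (β : ℝ) (hβ0 : 0 ≤ β) (hβ1 : β < 1) (j T : ℕ) :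
    ∑ t ∈ Finset.Icc j T, β ^ (t - j) ≤ 1 / (1 - β) := by
  have h1 : Finset.Icc j T = Finset.Ico j (T + 1) := by
    rw [Finset.Ico_add_one_right_eq_Icc]
  rw [h1, Finset.sum_Ico_eq_sum_range]
  have : ∀ k ∈ Finset.range (T + 1 - j), β ^ (j + k - j) = β ^ k := by
    intro k _; congr 1; omega
  rw [Finset.sum_congr rfl this]
  have h2 := geom_sum_Ico_le_of_lt_one hβ0 hβ1 (m := 0) (n := T + 1 - j)
  rw [Finset.range_eq_Ico]
  exact h2.trans (le_of_eq (by simp))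

/-- Per-coordinate bound. -/
lemma per_coord_bound (T : ℕ) (x : ℕ → ℝ) (β : ℝ) (hβ0 : 0 ≤ β) (hβ1 : β < 1)
    (M : ℕ → ℝ)
    (hM : ∀ t ∈ Finset.Icc 1 T, M t ^ 2 ≤ ∑ j ∈ Finset.Icc 1 t, β ^ (t - j) * x j ^ 2) :
    ∑ t ∈ Finset.Icc 1 T, M t ^ 2 / Real.sqrt t ≤
      (1 / (1 - β)) * (Real.sqrt (1 + Real.log T) *
        Real.sqrt (∑ t ∈ Finset.Icc 1 T, x t ^ 4)) := by
  have hβd : (0 : ℝ) < 1 - β := by linarith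
  have step1 : ∑ t ∈ Finset.Icc 1 T, M t ^ 2 / Real.sqrt t ≤
      ∑ t ∈ Finset.Icc 1 T, (∑ j ∈ Finset.Icc 1 t, β ^ (t - j) * x j ^ 2) / Real.sqrt t := by
    apply Finset.sum_le_sum
    intro t ht
    have ht1 : 1 ≤ t := (Finset.mem_Icc.mp ht).1
    have htpos : (0 : ℝ) < Real.sqrt t := by
      apply Real.sqrt_pos.mpr; exact_mod_cast Nat.pos_of_ne_zero (by omega)
    exact div_le_div_of_nonneg_right (hM t ht) htpos.le |>.trans_eq rfl
  have step2 : ∑ t ∈ Finset.Icc 1 T, (∑ j ∈ Finset.Icc 1 t, β ^ (t - j) * x j ^ 2) / Real.sqrt t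
      = ∑ j ∈ Finset.Icc 1 T, ∑ t ∈ Finset.Icc j T, β ^ (t - j) * x j ^ 2 / Real.sqrt t := by
    simp_rw [Finset.sum_div]
    apply Finset.sum_comm'
    intro t j
    simp only [Finset.mem_Icc]
    omega
  have step3 : ∑ j ∈ Finset.Icc 1 T, ∑ t ∈ Finset.Icc j T, β ^ (t - j) * x j ^ 2 / Real.sqrt t
      ≤ ∑ j ∈ Finset.Icc 1 T, (x j ^ 2 / Real.sqrt j) * (1 / (1 - β)) := by
    apply Finset.sum_le_sum
    intro j hj
    have hj1 : 1 ≤ j := (Finset.mem_Icc.mp hj).1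
    have hjpos : (0 : ℝ) < Real.sqrt j := by
      apply Real.sqrt_pos.mpr; exact_mod_cast Nat.pos_of_ne_zero (by omega)
    have hinner : ∀ t ∈ Finset.Icc j T, β ^ (t - j) * x j ^ 2 / Real.sqrt t ≤
        β ^ (t - j) * (x j ^ 2 / Real.sqrt j) := by
      intro t ht
      have hjt : j ≤ t := (Finset.mem_Icc.mp ht).1
      have hsq : Real.sqrt j ≤ Real.sqrt t := by
        apply Real.sqrt_le_sqrt; exact_mod_cast hjt
      rw [mul_div_assoc]
      apply mul_le_mul_of_nonneg_left _ (pow_nonneg hβ0 _)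
      exact div_le_div_of_nonneg_left (sq_nonneg _) hjpos hsq
    calc ∑ t ∈ Finset.Icc j T, β ^ (t - j) * x j ^ 2 / Real.sqrt t
        ≤ ∑ t ∈ Finset.Icc j T, β ^ (t - j) * (x j ^ 2 / Real.sqrt j) :=
          Finset.sum_le_sum hinner
      _ = (∑ t ∈ Finset.Icc j T, β ^ (t - j)) * (x j ^ 2 / Real.sqrt j) := by
          rw [Finset.sum_mul]
      _ ≤ (1 / (1 - β)) * (x j ^ 2 / Real.sqrt j) := by
          apply mul_le_mul_of_nonneg_right (geom_Icc_le β hβ0 hβ1 j T)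
          positivity
      _ = (x j ^ 2 / Real.sqrt j) * (1 / (1 - β)) := by ring
  have step4 : ∑ j ∈ Finset.Icc 1 T, x j ^ 2 / Real.sqrt j ≤
      Real.sqrt (1 + Real.log T) * Real.sqrt (∑ t ∈ Finset.Icc 1 T, x t ^ 4) := by
    set A : ℝ := ∑ j ∈ Finset.Icc 1 T, (1 : ℝ) / j with hA
    set B : ℝ := ∑ t ∈ Finset.Icc 1 T, x t ^ 4 with hB
    have hBnn : 0 ≤ B := Finset.sum_nonneg fun t _ => by positivity
    have hAnn : 0 ≤ A := Finset.sum_nonneg fun t _ => by positivity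
    have hcs : (∑ j ∈ Finset.Icc 1 T, x j ^ 2 / Real.sqrt j) ^ 2 ≤ A * B := by
      have := Finset.sum_mul_sq_le_sq_mul_sq (Finset.Icc 1 T)
        (fun j => 1 / Real.sqrt j) (fun j => x j ^ 2)
      have h1 : ∑ j ∈ Finset.Icc 1 T, (1 / Real.sqrt j) * x j ^ 2 =
          ∑ j ∈ Finset.Icc 1 T, x j ^ 2 / Real.sqrt j := by
        apply Finset.sum_congr rfl; intro j _; ring
      have h2 : ∑ j ∈ Finset.Icc 1 T, (1 / Real.sqrt (j : ℝ)) ^ 2 = A := by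
        apply Finset.sum_congr rfl; intro j _
        rw [div_pow, one_pow, Real.sq_sqrt (by positivity : (0:ℝ) ≤ (j:ℝ))]
      have h3 : ∑ j ∈ Finset.Icc 1 T, (x j ^ 2) ^ 2 = B := by
        apply Finset.sum_congr rfl; intro j _; ring
      rw [h1, h2, h3] at this
      exact this
    have hsum_nn : 0 ≤ ∑ j ∈ Finset.Icc 1 T, x j ^ 2 / Real.sqrt j :=
      Finset.sum_nonneg fun j _ => by positivity
    have hlogT : 0 ≤ 1 + Real.log T := by
      rcases Nat.eq_zero_or_pos T with h | h
      · subst h; simp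
      · have : (0:ℝ) ≤ Real.log T := Real.log_nonneg (by exact_mod_cast h)
        linarith
    have h5 : ∑ j ∈ Finset.Icc 1 T, x j ^ 2 / Real.sqrt j ≤ Real.sqrt (A * B) := by
      rw [Real.le_sqrt hsum_nn (by positivity)]
      exact hcs
    have h6 : Real.sqrt (A * B) ≤ Real.sqrt ((1 + Real.log T) * B) := by
      apply Real.sqrt_le_sqrt
      exact mul_le_mul_of_nonneg_right (by rw [hA]; exact my_harmonic_le_one_add_log T) hBnn
    rw [Real.sqrt_mul hlogT] at h6
    linarith
  calc ∑ t ∈ Finset.Icc 1 T, M t ^ 2 / Real.sqrt t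
      ≤ ∑ j ∈ Finset.Icc 1 T, (x j ^ 2 / Real.sqrt j) * (1 / (1 - β)) := by
        rw [step2] at step1; exact step1.trans step3
    _ = (1 / (1 - β)) * ∑ j ∈ Finset.Icc 1 T, x j ^ 2 / Real.sqrt j := by
        rw [Finset.mul_sum]; apply Finset.sum_congr rfl; intro j _; ring
    _ ≤ (1 / (1 - β)) * (Real.sqrt (1 + Real.log T) *
        Real.sqrt (∑ t ∈ Finset.Icc 1 T, x t ^ 4)) := by
        apply mul_le_mul_of_nonneg_left step4 (by positivity)

/-- bound on `Σ_{t=1}^T α_t Σ_i m_{t,i}²/√(s_{t,i})` where `m_t` is the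
EMA of the gradients with momenta `β_{1,j} ∈ [0, β₁]`, `β₁ < 1`, `α_t = α/√t`, and
`s_{t,i} ≥ c > 0`. -/
theorem adabelief_momentum_sum_bound
    (d T : ℕ) (g : ℕ → Fin d → ℝ) (β1seq : ℕ → ℝ) (β₁ α c : ℝ)
    (m : ℕ → Fin d → ℝ) (s : ℕ → Fin d → ℝ)
    (hβseq : ∀ j, 0 ≤ β1seq j ∧ β1seq j ≤ β₁)
    (hβ₁0 : 0 ≤ β₁) (hβ₁1 : β₁ < 1)
    (hα : 0 < α) (hc : 0 < c)
    (hm0 : m 0 = 0)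
    (hm : ∀ t, 1 ≤ t → ∀ i, m t i = β1seq t * m (t - 1) i + (1 - β1seq t) * g t i)
    (hs : ∀ t ∈ Finset.Icc 1 T, ∀ i, c ≤ s t i) :
    ∑ t ∈ Finset.Icc 1 T, (α / Real.sqrt t) * ∑ i, (m t i) ^ 2 / Real.sqrt (s t i)
      ≤ α * Real.sqrt (1 + Real.log T) / (Real.sqrt c * (1 - β₁) ^ 2) *
          ∑ i, Real.sqrt (∑ t ∈ Finset.Icc 1 T, (g t i) ^ 4) := by
  have hβd : (0 : ℝ) < 1 - β₁ := by linarith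
  have hβd1 : 1 - β₁ ≤ 1 := by linarith
  have hsc : (0 : ℝ) < Real.sqrt c := Real.sqrt_pos.mpr hc
  -- key inductive bound on m² componentwise
  have hmsq : ∀ t (i : Fin d), (m t i) ^ 2 ≤ ∑ j ∈ Finset.Icc 1 t, β₁ ^ (t - j) * g j i ^ 2 := by
    intro t
    induction t with
    | zero => intro i; simp [hm0]
    | succ n ih =>
      intro i
      rw [hm (n + 1) (by omega) i]
      simp only [Nat.add_sub_cancel]
      obtain ⟨hb0, hb1⟩ := hβseq (n + 1)
      have hb1' : β1seq (n + 1) ≤ 1 := le_trans hb1 (le_of_lt hβ₁1)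
      have hconv : (β1seq (n + 1) * m n i + (1 - β1seq (n + 1)) * g (n + 1) i) ^ 2 ≤
          β1seq (n + 1) * (m n i) ^ 2 + (1 - β1seq (n + 1)) * g (n + 1) i ^ 2 := by
        nlinarith [mul_nonneg (mul_nonneg hb0 (by linarith : (0:ℝ) ≤ 1 - β1seq (n + 1)))
          (sq_nonneg (m n i - g (n + 1) i))]
      have hstep : β1seq (n + 1) * (m n i) ^ 2 + (1 - β1seq (n + 1)) * g (n + 1) i ^ 2 ≤
          β₁ * (m n i) ^ 2 + g (n + 1) i ^ 2 := by
        have h1 : β1seq (n + 1) * (m n i) ^ 2 ≤ β₁ * (m n i) ^ 2 :=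
          mul_le_mul_of_nonneg_right hb1 (sq_nonneg _)
        have h2 : (1 - β1seq (n + 1)) * g (n + 1) i ^ 2 ≤ g (n + 1) i ^ 2 := by
          nlinarith [sq_nonneg (g (n + 1) i)]
        linarith
      have hrhs : ∑ j ∈ Finset.Icc 1 (n + 1), β₁ ^ (n + 1 - j) * g j i ^ 2 =
          β₁ * (∑ j ∈ Finset.Icc 1 n, β₁ ^ (n - j) * g j i ^ 2) + g (n + 1) i ^ 2 := by
        rw [Finset.sum_Icc_succ_top (by omega : 1 ≤ n + 1)]
        simp only [Nat.sub_self, pow_zero, one_mul]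
        congr 1
        rw [Finset.mul_sum]
        apply Finset.sum_congr rfl
        intro j hj
        have hjn : j ≤ n := (Finset.mem_Icc.mp hj).2
        have : n + 1 - j = (n - j) + 1 := by omega
        rw [this, pow_succ]
        ring
      rw [hrhs]
      have hind : β₁ * (m n i) ^ 2 ≤ β₁ * ∑ j ∈ Finset.Icc 1 n, β₁ ^ (n - j) * g j i ^ 2 :=
        mul_le_mul_of_nonneg_left (ih i) hβ₁0
      linarith
  -- first reduce √(s t i) to √c
  have step1 : ∑ t ∈ Finset.Icc 1 T, (α / Real.sqrt t) * ∑ i, (m t i) ^ 2 / Real.sqrt (s t i)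
      ≤ ∑ t ∈ Finset.Icc 1 T, (α / Real.sqrt t) * ∑ i, (m t i) ^ 2 / Real.sqrt c := by
    apply Finset.sum_le_sum
    intro t ht
    apply mul_le_mul_of_nonneg_left _ (by positivity)
    apply Finset.sum_le_sum
    intro i _
    apply div_le_div_of_nonneg_left (sq_nonneg _) hsc
    exact Real.sqrt_le_sqrt (hs t ht i)
  have step2 : ∑ t ∈ Finset.Icc 1 T, (α / Real.sqrt t) * ∑ i, (m t i) ^ 2 / Real.sqrt c
      = (α / Real.sqrt c) * ∑ i, ∑ t ∈ Finset.Icc 1 T, (m t i) ^ 2 / Real.sqrt t := by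
    calc ∑ t ∈ Finset.Icc 1 T, (α / Real.sqrt t) * ∑ i, (m t i) ^ 2 / Real.sqrt c
        = ∑ t ∈ Finset.Icc 1 T, ∑ i, (α / Real.sqrt c) * ((m t i) ^ 2 / Real.sqrt t) := by
          apply Finset.sum_congr rfl
          intro t _
          rw [Finset.mul_sum]
          apply Finset.sum_congr rfl
          intro i _
          ring
      _ = ∑ i, ∑ t ∈ Finset.Icc 1 T, (α / Real.sqrt c) * ((m t i) ^ 2 / Real.sqrt t) :=
          Finset.sum_comm
      _ = (α / Real.sqrt c) * ∑ i, ∑ t ∈ Finset.Icc 1 T, (m t i) ^ 2 / Real.sqrt t := by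
          rw [Finset.mul_sum]
          apply Finset.sum_congr rfl
          intro i _
          rw [Finset.mul_sum]
  have step3 : ∀ i : Fin d, ∑ t ∈ Finset.Icc 1 T, (m t i) ^ 2 / Real.sqrt t ≤
      (1 / (1 - β₁)) * (Real.sqrt (1 + Real.log T) *
        Real.sqrt (∑ t ∈ Finset.Icc 1 T, g t i ^ 4)) := by
    intro i
    exact per_coord_bound T (fun t => g t i) β₁ hβ₁0 hβ₁1 (fun t => m t i)
      (fun t _ => hmsq t i)
  have step4 : (α / Real.sqrt c) * ∑ i, ∑ t ∈ Finset.Icc 1 T, (m t i) ^ 2 / Real.sqrt t ≤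
      (α / Real.sqrt c) * ∑ i, (1 / (1 - β₁) ^ 2) * (Real.sqrt (1 + Real.log T) *
        Real.sqrt (∑ t ∈ Finset.Icc 1 T, g t i ^ 4)) := by
    apply mul_le_mul_of_nonneg_left _ (by positivity)
    apply Finset.sum_le_sum
    intro i _
    refine (step3 i).trans ?_
    apply mul_le_mul_of_nonneg_right _ (by positivity)
    rw [div_le_div_iff₀ (by linarith) (by positivity)]
    nlinarith
  have hfinal : (α / Real.sqrt c) * ∑ i, (1 / (1 - β₁) ^ 2) * (Real.sqrt (1 + Real.log T) *
        Real.sqrt (∑ t ∈ Finset.Icc 1 T, g t i ^ 4)) =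
      α * Real.sqrt (1 + Real.log T) / (Real.sqrt c * (1 - β₁) ^ 2) *
          ∑ i, Real.sqrt (∑ t ∈ Finset.Icc 1 T, (g t i) ^ 4) := by
    rw [Finset.mul_sum, Finset.mul_sum]
    apply Finset.sum_congr rfl
    intro i _
    field_simp
  calc ∑ t ∈ Finset.Icc 1 T, (α / Real.sqrt t) * ∑ i, (m t i) ^ 2 / Real.sqrt (s t i)
      ≤ ∑ t ∈ Finset.Icc 1 T, (α / Real.sqrt t) * ∑ i, (m t i) ^ 2 / Real.sqrt c := step1
    _ = (α / Real.sqrt c) * ∑ i, ∑ t ∈ Finset.Icc 1 T, (m t i) ^ 2 / Real.sqrt t := step2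
    _ ≤ (α / Real.sqrt c) * ∑ i, (1 / (1 - β₁) ^ 2) * (Real.sqrt (1 + Real.log T) *
        Real.sqrt (∑ t ∈ Finset.Icc 1 T, g t i ^ 4)) := step4
    _ = _ := hfinal
end

section
/- Let θ_t, m_t, g_t ∈ ℝ^d and s_t ∈ ℝ^d with strictly positive coordinates satisfy m_0 = 0, m_t = β_{1,t} m_{t−1} + (1−β_{1,t}) g_t, and θ_{t+1} = θ_t − α_t m_t/√s_t (componentwise), with β_{1,t} ∈ [0,1) and α_t > 0. Set θ_0 = θ_1 and define z_t = θ_t + (β_{1,t}/(1−β_{1,t}))(θ_t − θ_{t−1}) for t ≥ 1. Then for all t > 1: z_{t+1} − z_t = −(β_{1,t+1}/(1−β_{1,t+1}) − β_{1,t}/(1−β_{1,t})) · α_t m_t/√s_t − (β_{1,t}/(1−β_{1,t})) · (α_t/√s_t − α_{t−1}/√s_{t−1}) ⊙ m_{t−1} − α_t g_t/√s_t, and for t = 1: z_2 − z_1 = −(β_{1,2}/(1−β_{1,2}) − β_{1,1}/(1−β_{1,1})) · α_1 m_1/√s_1 − α_1 g_1/√s_1. -/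
/-- Lemma 6.1: recursion for the auxiliary sequence
`z_t = θ_t + (β_{1,t}/(1-β_{1,t}))(θ_t - θ_{t-1})` (with `θ_0 = θ_1`) of the AdaBelief
iterates `θ_{t+1} = θ_t - α_t m_t/√s_t`. -/
theorem adabelief_z_recursion
    (d : ℕ) (θ m g : ℕ → Fin d → ℝ) (s : ℕ → Fin d → ℝ)
    (β1seq α : ℕ → ℝ) (z : ℕ → Fin d → ℝ)
    (hs : ∀ t i, 0 < s t i)
    (hβ : ∀ t, 0 ≤ β1seq t ∧ β1seq t < 1)
    (hα : ∀ t, 0 < α t)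
    (hm0 : m 0 = 0)
    (hm : ∀ t, 1 ≤ t → ∀ i, m t i = β1seq t * m (t - 1) i + (1 - β1seq t) * g t i)
    (hθ : ∀ t, 1 ≤ t → ∀ i, θ (t + 1) i = θ t i - α t * m t i / Real.sqrt (s t i))
    (hθ0 : θ 0 = θ 1)
    (hz : ∀ t, 1 ≤ t → ∀ i,
      z t i = θ t i + β1seq t / (1 - β1seq t) * (θ t i - θ (t - 1) i)) :
    (∀ t, 1 < t → z (t + 1) - z t = fun i =>
        -(β1seq (t + 1) / (1 - β1seq (t + 1)) - β1seq t / (1 - β1seq t)) *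
            (α t * m t i / Real.sqrt (s t i))
          - β1seq t / (1 - β1seq t) *
              ((α t / Real.sqrt (s t i) - α (t - 1) / Real.sqrt (s (t - 1) i)) * m (t - 1) i)
          - α t * g t i / Real.sqrt (s t i)) ∧
    z 2 - z 1 = fun i =>
      -(β1seq 2 / (1 - β1seq 2) - β1seq 1 / (1 - β1seq 1)) *
          (α 1 * m 1 i / Real.sqrt (s 1 i))
        - α 1 * g 1 i / Real.sqrt (s 1 i) := by
  have hsne : ∀ t i, Real.sqrt (s t i) ≠ 0 := fun t i =>
    ne_of_gt (Real.sqrt_pos.mpr (hs t i))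
  have hβne : ∀ t, (1 : ℝ) - β1seq t ≠ 0 := fun t =>
    ne_of_gt (by linarith [(hβ t).2])
  constructor
  · intro t ht
    funext i
    obtain ⟨u, rfl⟩ : ∃ u, t = u + 2 := ⟨t - 2, by omega⟩
    have h1 := hz (u + 2 + 1) (by omega) i
    have h2 := hz (u + 2) (by omega) i
    have h3 := hθ (u + 2) (by omega) i
    have h4 := hθ (u + 1) (by omega) i
    have h5 := hm (u + 2) (by omega) i
    simp only [Nat.add_sub_cancel, show u + 2 - 1 = u + 1 from rfl] at h1 h2 h3 h4 h5
    simp only [Pi.sub_apply, h1, h2, h3, show u + 2 - 1 = u + 1 from rfl]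
    have h4' : θ (u + 2) i - θ (u + 1) i = -(α (u + 1) * m (u + 1) i / Real.sqrt (s (u + 1) i)) := by
      rw [h4]; ring
    rw [h4', h5]
    have a1 := hsne (u+2) i
    have a2 := hsne (u+1) i
    have b1 := hβne (u+2)
    have b2 := hβne (u+2+1)
    field_simp
    ring
  · funext i
    have h1 := hz 2 (by omega) i
    have h2 := hz 1 (by omega) i
    have h3 := hθ 1 (by omega) i
    have h5 := hm 1 (by omega) i
    norm_num at h1 h2 h3 h5
    rw [hθ0] at h2
    simp only [Pi.sub_apply, h1, h2, h3, h5, hm0, Pi.zero_apply]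
    have a1 := hsne 1 i
    have b1 := hβne 1
    have b2 := hβne 2
    field_simp
    ring
end

section
/- Let f : ℝ^d → ℝ be differentiable with L-Lipschitz gradient. Let θ_t, m_t, g_t ∈ ℝ^d and s_t ∈ ℝ^d with strictly positive coordinates satisfy m_0 = 0, m_t = β_{1,t} m_{t−1} + (1−β_{1,t}) g_t, θ_{t+1} = θ_t − α_t m_t/√s_t (componentwise), with β_{1,t} ∈ [0,1) and α_t > 0; set θ_0 = θ_1 and z_t = θ_t + (β_{1,t}/(1−β_{1,t}))(θ_t − θ_{t−1}). For i ≥ 1 define χ_i = (β_{1,i+1}/(1−β_{1,i+1}) − β_{1,i}/(1−β_{1,i})) α_i m_i/√s_i, δ_i = (β_{1,i}/(1−β_{1,i}))(α_i/√s_i − α_{i−1}/√s_{i−1}) ⊙ m_{i−1} for i ≥ 2 and δ_1 = 0, and η_i = α_i g_i/√s_i. Then for every t ≥ 1: f(z_{t+1}) − f(z_1) ≤ Σ_{i=1}^t [ −⟨∇f(z_i), χ_i⟩ − ⟨∇f(z_i), δ_i⟩ − ⟨∇f(z_i), η_i⟩ + (3L/2)(‖χ_i‖² + ‖δ_i‖²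 + ‖η_i‖²) ]. -/
open RealInnerProductSpace

lemma descent_lemma {E : Type*} [NormedAddCommGroup E] [InnerProductSpace ℝ E] [CompleteSpace E]
    (f : E → ℝ) (gradf : E → E) (L : ℝ) (hL : 0 ≤ L)
    (hgrad : ∀ x, HasGradientAt f (gradf x) x)
    (hlip : ∀ x y, ‖gradf x - gradf y‖ ≤ L * ‖x - y‖) (x y : E) :
    f y ≤ f x + ⟪gradf x, y - x⟫ + L / 2 * ‖y - x‖ ^ 2 := by
  have hgc : Continuous gradf := by
    refine (LipschitzWith.of_dist_le_mul (K := L.toNNReal) ?_).continuous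
    intro a b
    rw [Real.coe_toNNReal _ hL, dist_eq_norm, dist_eq_norm]
    exact hlip a b
  set v := y - x with hv
  have hpath : Continuous fun t : ℝ => x + t • v := by continuity
  have hφ : ∀ t : ℝ, HasDerivAt (fun t : ℝ => f (x + t • v))
      (⟪gradf (x + t • v), v⟫) t := by
    intro t
    have h1 : HasDerivAt (fun t : ℝ => x + t • v) v t := by
      simpa using ((hasDerivAt_id t).smul_const v).const_add x
    have h2 := (hgrad (x + t • v)).hasFDerivAt.comp_hasDerivAt t h1
    simp at h2
    exact h2
  have hic : Continuous fun t : ℝ => ⟪gradf (x + t • v), v⟫ :=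
    (hgc.comp hpath).inner continuous_const
  have hint : f (x + (1:ℝ) • v) - f (x + (0:ℝ) • v)
      = ∫ t in (0:ℝ)..1, ⟪gradf (x + t • v), v⟫ := by
    refine (intervalIntegral.integral_eq_sub_of_hasDerivAt (fun t _ => hφ t) ?_).symm
    exact hic.intervalIntegrable 0 1
  have hbound : ∫ t in (0:ℝ)..1, ⟪gradf (x + t • v), v⟫
      ≤ ∫ t in (0:ℝ)..1, (⟪gradf x, v⟫ + L * t * ‖v‖ ^ 2) := by
    refine intervalIntegral.integral_mono_on (by norm_num)
      (hic.intervalIntegrable 0 1)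
      ((by continuity : Continuous fun t : ℝ => ⟪gradf x, v⟫ + L * t * ‖v‖ ^ 2).intervalIntegrable 0 1) ?_
    intro t ht
    rcases ht with ⟨ht0, ht1⟩
    have h3 : ⟪gradf (x + t • v), v⟫ - ⟪gradf x, v⟫ = ⟪gradf (x + t • v) - gradf x, v⟫ := by
      rw [inner_sub_left]
    have h4 : ⟪gradf (x + t • v) - gradf x, v⟫ ≤ ‖gradf (x + t • v) - gradf x‖ * ‖v‖ :=
      real_inner_le_norm _ _
    have h5 : ‖gradf (x + t • v) - gradf x‖ ≤ L * (t * ‖v‖) := by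
      have := hlip (x + t • v) x
      simpa [norm_smul, abs_of_nonneg ht0] using this
    nlinarith [norm_nonneg v, norm_nonneg (gradf (x + t • v) - gradf x)]
  have hval : ∫ t in (0:ℝ)..1, (⟪gradf x, v⟫ + L * t * ‖v‖ ^ 2)
      = ⟪gradf x, v⟫ + L / 2 * ‖v‖ ^ 2 := by
    have h1 : ∫ t in (0:ℝ)..1, (⟪gradf x, v⟫ + L * t * ‖v‖ ^ 2)
        = (∫ t in (0:ℝ)..1, ⟪gradf x, v⟫) + ∫ t in (0:ℝ)..1, L * t * ‖v‖ ^ 2 := by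
      refine intervalIntegral.integral_add (intervalIntegrable_const) ?_
      exact (by continuity : Continuous fun t : ℝ => L * t * ‖v‖ ^ 2).intervalIntegrable 0 1
    rw [h1]
    have h2 : ∫ t in (0:ℝ)..1, L * t * ‖v‖ ^ 2 = L / 2 * ‖v‖ ^ 2 := by
      have : (fun t : ℝ => L * t * ‖v‖ ^ 2) = fun t : ℝ => (L * ‖v‖ ^ 2) * t := by
        funext t; ring
      rw [this, intervalIntegral.integral_const_mul, integral_id]
      ring
    rw [h2]
    simp
  have : f (x + (1:ℝ) • v) - f (x + (0:ℝ) • v) ≤ ⟪gradf x, v⟫ + L / 2 * ‖v‖ ^ 2 := by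
    rw [hint]; linarith [hbound, hval.le, hval.ge]
  simp only [one_smul, zero_smul, add_zero] at this
  have hxy : x + v = y := by rw [hv]; abel
  rw [hxy] at this
  linarith


set_option maxHeartbeats 1600000 in
/-- Lemma 6.2: descent-lemma bound along the auxiliary sequence
`z_t = θ_t + (β_{1,t}/(1-β_{1,t}))(θ_t - θ_{t-1})` for AdaBelief, for a function `f`
with `L`-Lipschitz gradient:
`f(z_{t+1}) - f(z_1) ≤ Σ_{i=1}^t [-⟨∇f(z_i), χ_i⟩ - ⟨∇f(z_i), δ_i⟩ - ⟨∇f(z_i), η_i⟩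
  + (3L/2)(‖χ_i‖² + ‖δ_i‖² + ‖η_i‖²)]`. -/
theorem adabelief_descent_sum_bound
    (d : ℕ) (L : ℝ)
    (f : EuclideanSpace ℝ (Fin d) → ℝ)
    (gradf : EuclideanSpace ℝ (Fin d) → EuclideanSpace ℝ (Fin d))
    (hgrad : ∀ x, HasGradientAt f (gradf x) x)
    (hlip : ∀ x y, ‖gradf x - gradf y‖ ≤ L * ‖x - y‖)
    (θ m g χ δ η z : ℕ → EuclideanSpace ℝ (Fin d))
    (s : ℕ → Fin d → ℝ) (β1seq α : ℕ → ℝ)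
    (hs : ∀ t i, 0 < s t i)
    (hβ : ∀ t, 0 ≤ β1seq t ∧ β1seq t < 1)
    (hα : ∀ t, 0 < α t)
    (hm0 : m 0 = 0)
    (hm : ∀ t, 1 ≤ t → ∀ i, m t i = β1seq t * m (t - 1) i + (1 - β1seq t) * g t i)
    (hθ : ∀ t, 1 ≤ t → ∀ i, θ (t + 1) i = θ t i - α t * m t i / Real.sqrt (s t i))
    (hθ0 : θ 0 = θ 1)
    (hz : ∀ t, 1 ≤ t → ∀ i,
      z t i = θ t i + β1seq t / (1 - β1seq t) * (θ t i - θ (t - 1) i))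
    (hχ : ∀ i, 1 ≤ i → ∀ j,
      χ i j = (β1seq (i + 1) / (1 - β1seq (i + 1)) - β1seq i / (1 - β1seq i)) *
        (α i * m i j / Real.sqrt (s i j)))
    (hδ1 : δ 1 = 0)
    (hδ : ∀ i, 2 ≤ i → ∀ j,
      δ i j = β1seq i / (1 - β1seq i) *
        ((α i / Real.sqrt (s i j) - α (i - 1) / Real.sqrt (s (i - 1) j)) * m (i - 1) j))
    (hη : ∀ i, 1 ≤ i → ∀ j, η i j = α i * g i j / Real.sqrt (s i j)) :
    ∀ t, 1 ≤ t →
      f (z (t + 1)) - f (z 1) ≤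
        ∑ i ∈ Finset.Icc 1 t,
          (-⟪gradf (z i), χ i⟫ - ⟪gradf (z i), δ i⟫ - ⟪gradf (z i), η i⟫
            + 3 * L / 2 * (‖χ i‖ ^ 2 + ‖δ i‖ ^ 2 + ‖η i‖ ^ 2)) := by
  rcases lt_or_ge L 0 with hL | hL
  · -- L < 0 forces the space to be a subsingleton; everything collapses.
    have hsub : ∀ a b : EuclideanSpace ℝ (Fin d), a = b := by
      intro a b
      have h1 := hlip a b
      have h2 := norm_nonneg (gradf a - gradf b)
      have h3 := norm_nonneg (a - b)
      have h4 : ‖a - b‖ = 0 := by nlinarith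
      exact sub_eq_zero.mp (norm_eq_zero.mp h4)
    intro t ht
    have hz0 : z (t + 1) = z 1 := hsub _ _
    have hχ0 : ∀ i, χ i = 0 := fun i => hsub _ _
    have hδ0 : ∀ i, δ i = 0 := fun i => hsub _ _
    have hη0 : ∀ i, η i = 0 := fun i => hsub _ _
    simp [hz0, hχ0, hδ0, hη0]
  · -- main case: 0 ≤ L
    have hkey : ∀ i, 1 ≤ i → ∀ j, z (i + 1) j - z i j = -(χ i j + δ i j + η i j) := by
      intro i hi j
      obtain ⟨k, rfl⟩ : ∃ k, i = k + 1 := ⟨i - 1, by omega⟩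
      have hb1 := hβ (k + 1)
      have hb2 := hβ (k + 2)
      have h1 : (1 : ℝ) - β1seq (k + 1) ≠ 0 := by intro h; linarith [hb1.2]
      have h2 : (1 : ℝ) - β1seq (k + 2) ≠ 0 := by intro h; linarith [hb2.2]
      have hs1 : Real.sqrt (s (k + 1) j) ≠ 0 := ne_of_gt (Real.sqrt_pos.mpr (hs _ j))
      have hz2 := hz (k + 2) (by omega) j
      have hz1 := hz (k + 1) (by omega) j
      have hθ2 := hθ (k + 1) (by omega) j
      have hχ1 := hχ (k + 1) (by omega) j
      have hη1 := hη (k + 1) (by omega) j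
      have hm1 := hm (k + 1) (by omega) j
      simp only [show k + 2 - 1 = k + 1 from rfl, show k + 1 - 1 = k from rfl] at *
      rcases Nat.eq_zero_or_pos k with rfl | hk
      · have hθ01 : θ 0 j = θ 1 j := by rw [hθ0]
        have hm0j : m 0 j = (0 : ℝ) := by rw [hm0]; rfl
        have hδ0 : δ 1 j = (0 : ℝ) := by rw [hδ1]; rfl
        rw [hz2, hz1, hθ2, hχ1, hη1, hδ0, hθ01, hm1, hm0j]
        field_simp
        ring
      · obtain ⟨k', rfl⟩ : ∃ k', k = k' + 1 := ⟨k - 1, by omega⟩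
        have hs0 : Real.sqrt (s (k' + 1) j) ≠ 0 := ne_of_gt (Real.sqrt_pos.mpr (hs _ j))
        have hθ1 := hθ (k' + 1) (by omega) j
        have hδ2 := hδ (k' + 2) (by omega) j
        simp only [show k' + 2 - 1 = k' + 1 from rfl] at hδ2
        rw [hz2, hz1, hθ2, hχ1, hη1, hδ2, hθ1, hm1]
        field_simp
        ring
    have hkeyv : ∀ i, 1 ≤ i → z (i + 1) - z i = -(χ i + δ i + η i) := by
      intro i hi
      ext j
      have := hkey i hi j
      simpa [PiLp.sub_apply, PiLp.add_apply, PiLp.neg_apply] using this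
    have hstep : ∀ i, 1 ≤ i →
        f (z (i + 1)) - f (z i) ≤
          -⟪gradf (z i), χ i⟫ - ⟪gradf (z i), δ i⟫ - ⟪gradf (z i), η i⟫
            + 3 * L / 2 * (‖χ i‖ ^ 2 + ‖δ i‖ ^ 2 + ‖η i‖ ^ 2) := by
      intro i hi
      have hd := descent_lemma f gradf L hL hgrad hlip (z i) (z (i + 1))
      rw [hkeyv i hi] at hd
      have hn : ‖-(χ i + δ i + η i)‖ ^ 2 ≤ 3 * (‖χ i‖ ^ 2 + ‖δ i‖ ^ 2 + ‖η i‖ ^ 2) := by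
        rw [norm_neg]
        have h3 : ‖χ i + δ i + η i‖ ≤ ‖χ i‖ + ‖δ i‖ + ‖η i‖ :=
          (norm_add_le _ _).trans (add_le_add_left (norm_add_le _ _) _)
        nlinarith [mul_self_le_mul_self (norm_nonneg (χ i + δ i + η i)) h3,
          sq_nonneg (‖χ i‖ - ‖δ i‖), sq_nonneg (‖δ i‖ - ‖η i‖), sq_nonneg (‖χ i‖ - ‖η i‖)]
      have hi2 : ⟪gradf (z i), -(χ i + δ i + η i)⟫
          = -⟪gradf (z i), χ i⟫ - ⟪gradf (z i), δ i⟫ - ⟪gradf (z i), η i⟫ := by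
        rw [inner_neg_right, inner_add_right, inner_add_right]; ring
      rw [hi2] at hd
      nlinarith [mul_le_mul_of_nonneg_left hn (by linarith : (0:ℝ) ≤ L / 2)]
    intro t ht
    induction t, ht using Nat.le_induction with
    | base =>
      have := hstep 1 le_rfl
      simpa using this
    | succ n hn ih =>
      rw [Finset.sum_Icc_succ_top (by omega : 1 ≤ n + 1)]
      have := hstep (n + 1) (by omega)
      linarith
end

section
/- Let α_1 ≥ α_2 ≥ … ≥ α_T > 0 with α_1 = α, and let s_1, …, s_T ∈ ℝ^d be componentwise nondecreasing with s_{1,i} ≥ c > 0 for all i. Then Σ_{t=2}^T Σ_{i=1}^d ( α_t/√(s_{t,i}) − α_{t−1}/√(s_{t−1,i}) )² ≤ dα²/c. -/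
lemma adabelief_aux (b : ℕ → ℝ) (T : ℕ) (hT : 1 ≤ T)
    (hmono : ∀ t, 2 ≤ t → t ≤ T → b t ≤ b (t - 1))
    (hnn : ∀ t, 1 ≤ t → t ≤ T → 0 ≤ b t) :
    b T ≤ b 1 ∧ ∑ t ∈ Finset.Icc 2 T, (b t - b (t - 1)) ^ 2 ≤ b 1 * (b 1 - b T) := by
  induction T, hT using Nat.le_induction with
  | base => simp
  | succ n hn IH =>
    obtain ⟨h1, h2⟩ := IH (fun t h2 hle => hmono t h2 (by omega))
      (fun t h1 hle => hnn t h1 (by omega))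
    have hstep : b (n + 1) ≤ b n := by
      have := hmono (n + 1) (by omega) le_rfl
      simpa using this
    have hbn : 0 ≤ b n := hnn n hn (by omega)
    have hb1 : 0 ≤ b 1 := hnn 1 le_rfl (by omega)
    constructor
    · exact hstep.trans h1
    · rw [Finset.sum_Icc_succ_top (by omega)]
      have hkey : (b (n + 1) - b ((n + 1) - 1)) ^ 2 ≤ b 1 * (b n - b (n + 1)) := by
        simp only [Nat.add_sub_cancel]
        have h3 : (b (n + 1) - b n) ^ 2 = (b n - b (n + 1)) * (b n - b (n + 1)) := by ring
        rw [h3]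
        apply mul_le_mul _ le_rfl (by linarith) hb1
        linarith [hnn (n + 1) (by omega) le_rfl]
      nlinarith

/-- with nonincreasing positive step sizes `α_t` (with `α_1 = α`) and
componentwise nondecreasing `s_t` with `s_{1,i} ≥ c > 0`, the sum of squared step-size
differences is bounded by `d α² / c`. -/
theorem adabelief_stepsize_diff_l2_bound
    (d T : ℕ) (α : ℕ → ℝ) (a c : ℝ)
    (s : ℕ → Fin d → ℝ)
    (hα_pos : ∀ t, 1 ≤ t → t ≤ T → 0 < α t)
    (hα_mono : ∀ t, 2 ≤ t → t ≤ T → α t ≤ α (t - 1))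
    (hα1 : α 1 = a)
    (hc : 0 < c)
    (hs1 : ∀ i, c ≤ s 1 i)
    (hs_mono : ∀ t, 2 ≤ t → t ≤ T → ∀ i, s (t - 1) i ≤ s t i) :
    ∑ t ∈ Finset.Icc 2 T, ∑ i,
        (α t / Real.sqrt (s t i) - α (t - 1) / Real.sqrt (s (t - 1) i)) ^ 2
      ≤ d * a ^ 2 / c := by
  rcases Nat.lt_or_ge T 1 with hT | hT
  · interval_cases T
    simp only [show Finset.Icc 2 0 = ∅ by rfl, Finset.sum_empty]
    positivity
  · have ha : 0 < a := hα1 ▸ hα_pos 1 le_rfl hT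
    rw [Finset.sum_comm]
    have key : ∀ i : Fin d, ∑ t ∈ Finset.Icc 2 T,
        (α t / Real.sqrt (s t i) - α (t - 1) / Real.sqrt (s (t - 1) i)) ^ 2 ≤ a ^ 2 / c := by
      intro i
      -- s t i ≥ c for 1 ≤ t ≤ T
      have hsc : ∀ t, 1 ≤ t → t ≤ T → c ≤ s t i := by
        intro t h1
        induction t, h1 using Nat.le_induction with
        | base => exact fun _ => hs1 i
        | succ n hn IH =>
          intro h
          have := hs_mono (n + 1) (by omega) h i
          simp only [Nat.add_sub_cancel] at this
          exact (IH (by omega)).trans this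
      set b : ℕ → ℝ := fun t => α t / Real.sqrt (s t i) with hb
      have hbnn : ∀ t, 1 ≤ t → t ≤ T → 0 ≤ b t := by
        intro t h1 h2
        have := hα_pos t h1 h2
        have := (hc.trans_le (hsc t h1 h2))
        positivity
      have hbmono : ∀ t, 2 ≤ t → t ≤ T → b t ≤ b (t - 1) := by
        intro t h2 hle
        have hs' : Real.sqrt (s (t - 1) i) ≤ Real.sqrt (s t i) :=
          Real.sqrt_le_sqrt (hs_mono t h2 hle i)
        have hspos : 0 < Real.sqrt (s (t - 1) i) :=
          Real.sqrt_pos.mpr (hc.trans_le (hsc (t - 1) (by omega) (by omega)))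
        exact div_le_div₀ (hα_pos (t - 1) (by omega) (by omega)).le
          (hα_mono t h2 hle) hspos hs'
      obtain ⟨h1, h2⟩ := adabelief_aux b T hT hbmono hbnn
      have hb1 : b 1 ≤ a / Real.sqrt c := by
        have hs1' : Real.sqrt c ≤ Real.sqrt (s 1 i) := Real.sqrt_le_sqrt (hs1 i)
        have : 0 < Real.sqrt c := Real.sqrt_pos.mpr hc
        rw [hb]
        simp only [hα1]
        exact div_le_div₀ ha.le le_rfl this hs1'
      have hbT : 0 ≤ b T := hbnn T hT le_rfl
      have hsqc : 0 < Real.sqrt c := Real.sqrt_pos.mpr hc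
      have h4 : b 1 * (b 1 - b T) ≤ (a / Real.sqrt c) * (a / Real.sqrt c) := by
        have hb1nn : 0 ≤ b 1 := hbnn 1 le_rfl hT
        nlinarith
      have h5 : (a / Real.sqrt c) * (a / Real.sqrt c) = a ^ 2 / c := by
        rw [div_mul_div_comm, Real.mul_self_sqrt hc.le]; ring
      linarith
    calc ∑ i : Fin d, ∑ t ∈ Finset.Icc 2 T,
          (α t / Real.sqrt (s t i) - α (t - 1) / Real.sqrt (s (t - 1) i)) ^ 2
        ≤ ∑ _i : Fin d, a ^ 2 / c := Finset.sum_le_sum fun i _ => key i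
      _ = d * a ^ 2 / c := by
          rw [Finset.sum_const, Finset.card_fin, nsmul_eq_mul]; ring
end
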